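/- arXiv:2403.14704 — 9 statements merged into one kernel-verified Lean document; each statement's English description precedes it below -/
import Mathlib

section
/- Let M = (ST, AC, {av_A | A ⊆ AG}, {out_A | A ⊆ AG}, lab) be an abstract multi-agent action model. The following two conditions are equivalent: (1) for every agent a ∈ AG, coalition A ⊆ AG and state s ∈ ST, (a) av_a(s) is nonempty and (b) av_A(s) = ⊕{av_a(s) | a ∈ A}; (2) for all disjoint coalitions A, B ⊆ AG and every state s ∈ ST, (a) av_A(s) is nonempty, (b) for every σ_{A∪B} ∈ av_{A∪B}(s), σ_{A∪B}|_A ∈ av_A(s), and (c) for every σ_A ∈ av_A(s) and σ_B ∈ av_B(s), σ_A ∪ σ_B ∈ av_{A∪B}(s). -/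
open scoped Classical

/-- A joint action of a coalition `A`: an assignment of an action to each agent in `A`. -/
def JA (Agent Action : Type) (A : Set Agent) : Type :=
  (a : Agent) → a ∈ A → Action

namespace JA

variable {Agent Action : Type}

/-- The restriction `σ|_B` of a joint action of `A` to a subcoalition `B ⊆ A`. -/
def restrict {A B : Set Agent} (h : B ⊆ A) (σ : JA Agent Action A) : JA Agent Action B :=
  fun a ha => σ a (h ha)

/-- The union `σ_A ∪ σ_B` of joint actions of coalitions `A` and `B`. -/
noncomputable def union {A B : Set Agent} (σA : JA Agent Action A) (σB : JA Agent Action B) :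
    JA Agent Action (A ∪ B) :=
  fun a ha =>
    if h : a ∈ A then σA a h else σB a ((show a ∈ A ∨ a ∈ B from ha).resolve_left h)

/-- Transport of a joint action along an equality of coalitions. -/
def cast {A B : Set Agent} (h : A = B) (σ : JA Agent Action A) : JA Agent Action B :=
  fun a ha => σ a (by rw [h]; exact ha)

end JA

/-- An abstract multi-agent action model. -/
structure AMAM (Agent AP : Type) : Type 1 where
  State : Type
  Action : Type
  state_nonempty : Nonempty State
  action_nonempty : Nonempty Action
  av : (A : Set Agent) → State → Set (JA Agent Action A)
  out : (A : Set Agent) → State → JA Agent Action A → Set State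
  lab : State → Set AP

/-- `⊕{Sa(a) | a ∈ A}`: merge of a family of sets of joint actions of singleton coalitions,
indexed by the agents in `A`: the set of joint actions of `A` obtained as unions `⋃_{a∈A} f(a)`
over choice functions `f` with `f(a) ∈ Sa(a)`. -/
def oplusSingle {Agent Action : Type} (A : Set Agent)
    (Sa : (a : Agent) → Set (JA Agent Action ({a} : Set Agent))) :
    Set (JA Agent Action A) :=
  {σ | ∃ f : (a : Agent) → a ∈ A → JA Agent Action ({a} : Set Agent),
        (∀ (a : Agent) (ha : a ∈ A), f a ha ∈ Sa a) ∧
        (∀ (a : Agent) (ha : a ∈ A), σ a ha = f a ha a rfl)}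

/-- A concurrent game model. -/
structure IsCGM {Agent AP : Type} (M : AMAM Agent AP) : Prop where
  av_agent_nonempty : ∀ (a : Agent) (s : M.State), (M.av {a} s).Nonempty
  av_oplus : ∀ (A : Set Agent) (s : M.State),
    M.av A s = oplusSingle A (fun a => M.av {a} s)
  out_det : ∀ (s : M.State) (σ : JA Agent M.Action (Set.univ : Set Agent)),
    (σ ∈ M.av Set.univ s → ∃ t : M.State, M.out Set.univ s σ = {t}) ∧
    (σ ∉ M.av Set.univ s → M.out Set.univ s σ = ∅)
  out_union : ∀ (A : Set Agent) (s : M.State) (σ : JA Agent M.Action A),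
    M.out A s σ = {t | ∃ σG : JA Agent M.Action (Set.univ : Set Agent),
      JA.restrict (Set.subset_univ A) σG = σ ∧ t ∈ M.out Set.univ s σG}

/-- A general concurrent game model. -/
structure IsGCGM {Agent AP : Type} (M : AMAM Agent AP) : Prop where
  av_restrict : ∀ (A : Set Agent) (s : M.State),
    M.av A s = {σ | ∃ σG ∈ M.av Set.univ s, JA.restrict (Set.subset_univ A) σG = σ}
  av_grand : ∀ s : M.State,
    M.av Set.univ s = {σ | M.out Set.univ s σ ≠ ∅}
  out_union : ∀ (A : Set Agent) (s : M.State) (σ : JA Agent M.Action A),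
    M.out A s σ = {t | ∃ σG : JA Agent M.Action (Set.univ : Set Agent),
      JA.restrict (Set.subset_univ A) σG = σ ∧ t ∈ M.out Set.univ s σG}

/-- The language `Φ` of coalition logic. -/
inductive Formula (Agent AP : Type) : Type
  | top : Formula Agent AP
  | atom : AP → Formula Agent AP
  | neg : Formula Agent AP → Formula Agent AP
  | and : Formula Agent AP → Formula Agent AP → Formula Agent AP
  | coal : Set Agent → Formula Agent AP → Formula Agent AP

namespace Formula

variable {Agent AP : Type}

def bot : Formula Agent AP := .neg .top
def or (φ ψ : Formula Agent AP) : Formula Agent AP := .neg ((φ.neg).and (ψ.neg))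
def imp (φ ψ : Formula Agent AP) : Formula Agent AP := (φ.neg).or ψ
def iff (φ ψ : Formula Agent AP) : Formula Agent AP := (φ.imp ψ).and (ψ.imp φ)

/-- Modal depth. -/
def mdepth : Formula Agent AP → ℕ
  | .top => 0
  | .atom _ => 0
  | .neg φ => φ.mdepth
  | .and φ ψ => max φ.mdepth ψ.mdepth
  | .coal _ φ => φ.mdepth + 1

end Formula

/-- Satisfaction of a formula at a state of an abstract multi-agent action model. -/
def Sat {Agent AP : Type} (M : AMAM Agent AP) : M.State → Formula Agent AP → Prop
  | _, .top => True
  | s, .atom p => p ∈ M.lab s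
  | s, .neg φ => ¬ Sat M s φ
  | s, .and φ ψ => Sat M s φ ∧ Sat M s ψ
  | s, .coal A φ => ∃ σ ∈ M.av A s, ∀ t ∈ M.out A s σ, Sat M t φ

/-- CL-validity: truth at every state of every concurrent game model. -/
def CLValid {Agent AP : Type} (φ : Formula Agent AP) : Prop :=
  ∀ M : AMAM Agent AP, IsCGM M → ∀ s : M.State, Sat M s φ

/-- MCL-validity: truth at every state of every general concurrent game model. -/
def MCLValid {Agent AP : Type} (φ : Formula Agent AP) : Prop :=
  ∀ M : AMAM Agent AP, IsGCGM M → ∀ s : M.State, Sat M s φ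

/-- Propositional evaluation of a formula under a valuation, treating coalition
formulas (and atoms) as propositional atoms. -/
def propEval {Agent AP : Type} (v : Formula Agent AP → Bool) : Formula Agent AP → Bool
  | .top => true
  | .atom p => v (.atom p)
  | .neg φ => !(propEval v φ)
  | .and φ ψ => propEval v φ && propEval v ψ
  | .coal A φ => v (.coal A φ)

/-- `φ` is (an instance of) a propositional tautology. -/
def Tautology {Agent AP : Type} (φ : Formula Agent AP) : Prop :=
  ∀ v : Formula Agent AP → Bool, propEval v φ = true

/-- `φ` is propositionally satisfiable. -/
def PropSatisfiable {Agent AP : Type} (φ : Formula Agent AP) : Prop :=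
  ∃ v : Formula Agent AP → Bool, propEval v φ = true

/-- Pauly's axiomatic system for Coalition Logic CL. -/
inductive PaulyCL {Agent AP : Type} : Formula Agent AP → Prop
  | tau {φ : Formula Agent AP} : Tautology φ → PaulyCL φ
  | mon (A : Set Agent) (φ ψ : Formula Agent AP) :
      PaulyCL ((Formula.coal A (φ.and ψ)).imp (Formula.coal A φ))
  | live (A : Set Agent) : PaulyCL ((Formula.coal A Formula.bot).neg)
  | ser (A : Set Agent) : PaulyCL (Formula.coal A Formula.top)
  | ia {A B : Set Agent} (h : A ∩ B = ∅) (φ ψ : Formula Agent AP) :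
      PaulyCL (((Formula.coal A φ).and (Formula.coal B ψ)).imp
        (Formula.coal (A ∪ B) (φ.and ψ)))
  | max (φ : Formula Agent AP) :
      PaulyCL (((Formula.coal ∅ φ.neg).neg).imp (Formula.coal Set.univ φ))
  | mp {φ ψ : Formula Agent AP} : PaulyCL (φ.imp ψ) → PaulyCL φ → PaulyCL ψ
  | re {φ ψ : Formula Agent AP} (A : Set Agent) :
      PaulyCL (φ.iff ψ) → PaulyCL ((Formula.coal A φ).iff (Formula.coal A ψ))

/-- The alternative axiomatic system for Coalition Logic CL. -/
inductive AltCL {Agent AP : Type} : Formula Agent AP → Prop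
  | tau {φ : Formula Agent AP} : Tautology φ → AltCL φ
  | mg (A : Set Agent) (φ ψ : Formula Agent AP) :
      AltCL ((Formula.coal ∅ (φ.imp ψ)).imp ((Formula.coal A φ).imp (Formula.coal A ψ)))
  | mc {A B : Set Agent} (h : A ⊆ B) (φ : Formula Agent AP) :
      AltCL ((Formula.coal A φ).imp (Formula.coal B φ))
  | live (A : Set Agent) : AltCL ((Formula.coal A Formula.bot).neg)
  | ser (A : Set Agent) : AltCL (Formula.coal A Formula.top)
  | ia {A B : Set Agent} (h : A ∩ B = ∅) (φ ψ : Formula Agent AP) :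
      AltCL (((Formula.coal A φ).and (Formula.coal B ψ)).imp
        (Formula.coal (A ∪ B) (φ.and ψ)))
  | det (A : Set Agent) (φ ψ : Formula Agent AP) :
      AltCL ((Formula.coal A (φ.or ψ)).imp ((Formula.coal A φ).or (Formula.coal Set.univ ψ)))
  | mp {φ ψ : Formula Agent AP} : AltCL (φ.imp ψ) → AltCL φ → AltCL ψ
  | cn {φ : Formula Agent AP} (A : Set Agent) (ψ : Formula Agent AP) :
      AltCL φ → AltCL ((Formula.coal A ψ).imp (Formula.coal ∅ φ))

/-- The axiomatic system for Minimal Coalition Logic MCL. -/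
inductive MCLProv {Agent AP : Type} : Formula Agent AP → Prop
  | tau {φ : Formula Agent AP} : Tautology φ → MCLProv φ
  | mg (A : Set Agent) (φ ψ : Formula Agent AP) :
      MCLProv ((Formula.coal ∅ (φ.imp ψ)).imp ((Formula.coal A φ).imp (Formula.coal A ψ)))
  | mc {A B : Set Agent} (h : A ⊆ B) (φ : Formula Agent AP) :
      MCLProv ((Formula.coal A φ).imp (Formula.coal B φ))
  | live (A : Set Agent) : MCLProv ((Formula.coal A Formula.bot).neg)
  | mp {φ ψ : Formula Agent AP} : MCLProv (φ.imp ψ) → MCLProv φ → MCLProv ψ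
  | cn {φ : Formula Agent AP} (A : Set Agent) (ψ : Formula Agent AP) :
      MCLProv φ → MCLProv ((Formula.coal A ψ).imp (Formula.coal ∅ φ))

/-- Literals of classical propositional logic. -/
inductive IsLiteral {Agent AP : Type} : Formula Agent AP → Prop
  | pos (p : AP) : IsLiteral (Formula.atom p)
  | neg (p : AP) : IsLiteral ((Formula.atom p).neg)

/-- Elementary disjunctions: disjunctions of (possibly zero) literals. -/
inductive IsElemDisj {Agent AP : Type} : Formula Agent AP → Prop
  | bot : IsElemDisj Formula.bot
  | lit {φ : Formula Agent AP} : IsLiteral φ → IsElemDisj φ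
  | disj {φ ψ : Formula Agent AP} : IsElemDisj φ → IsElemDisj ψ → IsElemDisj (φ.or ψ)

/-- Elementary conjunctions: conjunctions of (possibly zero) literals. -/
inductive IsElemConj {Agent AP : Type} : Formula Agent AP → Prop
  | top : IsElemConj Formula.top
  | lit {φ : Formula Agent AP} : IsLiteral φ → IsElemConj φ
  | conj {φ ψ : Formula Agent AP} : IsElemConj φ → IsElemConj ψ → IsElemConj (φ.and ψ)

/-- Conjunction of a list of formulas. -/
def bigAnd {Agent AP : Type} : List (Formula Agent AP) → Formula Agent AP
  | [] => Formula.top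
  | [φ] => φ
  | φ :: l => φ.and (bigAnd l)

/-- Disjunction of a list of formulas. -/
def bigOr {Agent AP : Type} : List (Formula Agent AP) → Formula Agent AP
  | [] => Formula.bot
  | [φ] => φ
  | φ :: l => φ.or (bigOr l)

/-- The data of a standard formula
`γ ∨ (⋀_{i∈N} ⟨A_i⟩φ_i → ⋁_{j∈P} ⟨B_j⟩ψ_j)`. -/
structure StdFormula (Agent AP : Type) where
  γ : Formula Agent AP
  hγ : IsElemDisj γ
  n : ℕ
  m : ℕ
  hm : 0 < m
  A : Fin n → Set Agent
  φ : Fin n → Formula Agent AP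
  B : Fin m → Set Agent
  ψ : Fin m → Formula Agent AP
  hN : n ≠ 0 → ∃ i : Fin n, A i = (∅ : Set Agent) ∧ φ i = Formula.top
  hP : ∃ j : Fin m, B j = (Set.univ : Set Agent) ∧ ψ j = Formula.bot

/-- The standard formula determined by the data. -/
def StdFormula.toFormula {Agent AP : Type} (S : StdFormula Agent AP) : Formula Agent AP :=
  S.γ.or ((bigAnd (List.ofFn fun i => Formula.coal (S.A i) (S.φ i))).imp
      (bigOr (List.ofFn fun j => Formula.coal (S.B j) (S.ψ j))))

/-- `φ_{N0} = ⋀{φ_i | i ∈ N, A_i = ∅}`. -/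
noncomputable def StdFormula.phiN0 {Agent AP : Type} (S : StdFormula Agent AP) :
    Formula Agent AP :=
  bigAnd (((List.finRange S.n).filter fun i => decide (S.A i = (∅ : Set Agent))).map S.φ)

/-- The atomic propositions that are conjuncts of a formula. -/
def posAtoms {Agent AP : Type} : Formula Agent AP → Set AP
  | .atom p => {p}
  | .and φ ψ => posAtoms φ ∪ posAtoms ψ
  | _ => ∅

/-- A general game form with outcome states indexed by `ι`. -/
structure GameForm (Agent ι : Type) : Type 1 where
  Action0 : Type
  action_nonempty : Nonempty Action0
  outcome_nonempty : Nonempty ι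
  av0 : (A : Set Agent) → Set (JA Agent Action0 A)
  out0 : (A : Set Agent) → JA Agent Action0 A → Set ι
  av0_restrict : ∀ A : Set Agent,
    av0 A = {σ | ∃ σG ∈ av0 Set.univ, JA.restrict (Set.subset_univ A) σG = σ}
  av0_out : ∀ σ : JA Agent Action0 (Set.univ : Set Agent),
    σ ∈ av0 Set.univ ↔ out0 Set.univ σ ≠ ∅
  out0_union : ∀ (A : Set Agent) (σ : JA Agent Action0 A),
    out0 A σ = {j | ∃ σG : JA Agent Action0 (Set.univ : Set Agent),
      JA.restrict (Set.subset_univ A) σG = σ ∧ j ∈ out0 Set.univ σG}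

/-- The model grafted from a family of pointed models `(Mi i, si i)`, an elementary
conjunction `γ`, and a general game form `F`.  The new state `s_0` is `none`; the states
of `Mi i` are embedded as `some ⟨i, ·⟩`; the actions of `F` and of the `Mi i` are kept
disjoint via a sum type. -/
noncomputable def grafted {Agent AP ι : Type}
    (Mi : ι → AMAM Agent AP) (si : (i : ι) → (Mi i).State)
    (γ : Formula Agent AP) (F : GameForm Agent ι) : AMAM Agent AP where
  State := Option ((i : ι) × (Mi i).State)
  Action := F.Action0 ⊕ ((i : ι) × (Mi i).Action)
  state_nonempty := ⟨none⟩
  action_nonempty := ⟨Sum.inl (Classical.choice F.action_nonempty)⟩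
  av := fun A s =>
    match s with
    | none => {σ | ∃ τ ∈ F.av0 A, σ = fun a ha => Sum.inl (τ a ha)}
    | some ⟨i, u⟩ => {σ | ∃ τ ∈ (Mi i).av A u, σ = fun a ha => Sum.inr ⟨i, τ a ha⟩}
  out := fun A s σ =>
    match s with
    | none => {t | ∃ τ : JA Agent F.Action0 A,
        (σ = fun a ha => Sum.inl (τ a ha)) ∧ ∃ j ∈ F.out0 A τ, t = some ⟨j, si j⟩}
    | some ⟨i, u⟩ => {t | ∃ τ : JA Agent (Mi i).Action A,
        (σ = fun a ha => Sum.inr ⟨i, τ a ha⟩) ∧ ∃ u' ∈ (Mi i).out A u τ, t = some ⟨i, u'⟩}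
  lab := fun s =>
    match s with
    | none => posAtoms γ
    | some ⟨i, u⟩ => (Mi i).lab u

/-! A joint action of `A` lies in `⊕{av_a(s) | a ∈ A}` exactly when each of its restrictions to a
single agent is available. Condition (2) says that availability is closed under restriction and
under unions of disjoint coalitions; restricting to singletons gives one inclusion, and building a
joint action agent by agent over the finite coalition gives the other. -/

namespace JA

variable {Agent Action : Type}

theorem eq_of_apply_eq_singleton {a : Agent} (σ τ : JA Agent Action ({a} : Set Agent))
    (h : σ a rfl = τ a rfl) : σ = τ := by
  funext x hx
  obtain rfl : x = a := hx
  exact h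

theorem eq_of_empty (σ τ : JA Agent Action ∅) : σ = τ := by
  funext x hx
  exact absurd hx (Set.notMem_empty x)

theorem union_restrict_restrict {B C : Set Agent} (σ : JA Agent Action (B ∪ C)) :
    union (restrict Set.subset_union_left σ) (restrict Set.subset_union_right σ) = σ := by
  funext x hx
  unfold union
  split_ifs <;> rfl

theorem restrict_singleton_union_of_mem {A B : Set Agent} {a : Agent} (ha : a ∈ A)
    (σA : JA Agent Action A) (σB : JA Agent Action B) :
    restrict (Set.singleton_subset_iff.2 (Set.mem_union_left B ha)) (union σA σB) =
      restrict (Set.singleton_subset_iff.2 ha) σA :=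
  eq_of_apply_eq_singleton _ _ (dif_pos ha)

theorem restrict_singleton_union_of_notMem {A B : Set Agent} {a : Agent} (ha : a ∉ A)
    (hb : a ∈ B) (σA : JA Agent Action A) (σB : JA Agent Action B) :
    restrict (Set.singleton_subset_iff.2 (Set.mem_union_right A hb)) (union σA σB) =
      restrict (Set.singleton_subset_iff.2 hb) σB :=
  eq_of_apply_eq_singleton _ _ (dif_neg ha)

end JA

section oplusSingle

variable {Agent Action : Type} {T : (a : Agent) → Set (JA Agent Action {a})}

theorem mem_oplusSingle_iff {A : Set Agent} {σ : JA Agent Action A} :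
    σ ∈ oplusSingle A T ↔
      ∀ (a : Agent) (ha : a ∈ A), JA.restrict (Set.singleton_subset_iff.2 ha) σ ∈ T a := by
  constructor
  · rintro ⟨f, hfT, hσf⟩ a ha
    have hσa : JA.restrict (Set.singleton_subset_iff.2 ha) σ = f a ha :=
      JA.eq_of_apply_eq_singleton _ _ (hσf a ha)
    exact hσa ▸ hfT a ha
  · exact fun h => ⟨fun a ha => JA.restrict (Set.singleton_subset_iff.2 ha) σ, h, fun _ _ => rfl⟩

theorem oplusSingle_nonempty (hT : ∀ a, (T a).Nonempty) (A : Set Agent) :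
    (oplusSingle A T).Nonempty := by
  choose τ hτ using hT
  refine ⟨fun a _ => τ a a rfl, mem_oplusSingle_iff.2 fun a _ => ?_⟩
  convert hτ a using 1
  exact JA.eq_of_apply_eq_singleton _ _ rfl

theorem restrict_mem_oplusSingle {A B : Set Agent} (hBA : B ⊆ A) {σ : JA Agent Action A}
    (hσ : σ ∈ oplusSingle A T) : JA.restrict hBA σ ∈ oplusSingle B T :=
  mem_oplusSingle_iff.2 fun a ha => mem_oplusSingle_iff.1 hσ a (hBA ha)

theorem union_mem_oplusSingle {A B : Set Agent} {σA : JA Agent Action A} {σB : JA Agent Action B}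
    (hA : σA ∈ oplusSingle A T) (hB : σB ∈ oplusSingle B T) :
    JA.union σA σB ∈ oplusSingle (A ∪ B) T := by
  refine mem_oplusSingle_iff.2 fun a hab => ?_
  by_cases ha : a ∈ A
  · rw [JA.restrict_singleton_union_of_mem ha]
    exact mem_oplusSingle_iff.1 hA a ha
  · have hb : a ∈ B := hab.resolve_left ha
    rw [JA.restrict_singleton_union_of_notMem ha hb]
    exact mem_oplusSingle_iff.1 hB a hb

end oplusSingle

section DisjointClosure

variable {Agent Action : Type} {S : (A : Set Agent) → Set (JA Agent Action A)}

theorem restrict_mem_of_subset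
    (hres : ∀ A B : Set Agent, A ∩ B = ∅ →
      ∀ σ ∈ S (A ∪ B), JA.restrict Set.subset_union_left σ ∈ S A)
    {A B : Set Agent} (hBA : B ⊆ A) {σ : JA Agent Action A} (hσ : σ ∈ S A) :
    JA.restrict hBA σ ∈ S B := by
  -- `A` is generalized so that `B ∪ (A \ B) = A` can be substituted in the type of `σ`.
  have key : ∀ A', B ∪ (A \ B) = A' → ∀ σ' ∈ S A', ∀ h : B ⊆ A', JA.restrict h σ' ∈ S B := by
    rintro A' rfl σ' hσ' -
    exact hres B (A \ B) (Set.inter_sdiff_self B A) σ' hσ'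
  exact key A (Set.union_sdiff_cancel hBA) σ hσ hBA

theorem mem_of_restrict_mem
    (hunion : ∀ A B : Set Agent, A ∩ B = ∅ →
      ∀ σA ∈ S A, ∀ σB ∈ S B, JA.union σA σB ∈ S (A ∪ B))
    {B C : Set Agent} (hBC : B ∩ C = ∅) {σ : JA Agent Action (B ∪ C)}
    (hB : JA.restrict Set.subset_union_left σ ∈ S B)
    (hC : JA.restrict Set.subset_union_right σ ∈ S C) : σ ∈ S (B ∪ C) := by
  rw [← JA.union_restrict_restrict σ]
  exact hunion B C hBC _ hB _ hC

theorem mem_of_forall_restrict_singleton_mem (hempty : (S ∅).Nonempty)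
    (hunion : ∀ A B : Set Agent, A ∩ B = ∅ →
      ∀ σA ∈ S A, ∀ σB ∈ S B, JA.union σA σB ∈ S (A ∪ B))
    {A : Set Agent} (hA : A.Finite) :
    ∀ σ : JA Agent Action A,
      (∀ (a : Agent) (ha : a ∈ A), JA.restrict (Set.singleton_subset_iff.2 ha) σ ∈ S {a}) →
      σ ∈ S A := by
  induction A, hA using Set.Finite.induction_on with
  | empty =>
    obtain ⟨τ, hτ⟩ := hempty
    intro σ _
    rwa [JA.eq_of_empty σ τ]
  | @insert b A hbA _ ih =>
    rw [← Set.singleton_union]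
    intro σ hσ
    refine mem_of_restrict_mem hunion (Set.singleton_inter_eq_empty.2 hbA) (hσ b (Or.inl rfl)) ?_
    exact ih _ fun a ha => hσ a (Or.inr ha)

end DisjointClosure

theorem stmt1_general {Agent AP : Type} [Fintype Agent] [Nonempty Agent]
    (M : AMAM Agent AP) :
    (∀ (a : Agent) (A : Set Agent) (s : M.State),
        (M.av {a} s).Nonempty ∧ M.av A s = oplusSingle A (fun b => M.av {b} s))
    ↔
    (∀ (A B : Set Agent), A ∩ B = ∅ → ∀ s : M.State,
        (M.av A s).Nonempty ∧
        (∀ σ ∈ M.av (A ∪ B) s,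
          JA.restrict (show A ⊆ A ∪ B from Set.subset_union_left) σ ∈ M.av A s) ∧
        (∀ σA ∈ M.av A s, ∀ σB ∈ M.av B s, JA.union σA σB ∈ M.av (A ∪ B) s)) := by
  constructor
  · intro h A B _ s
    have hav : ∀ C, M.av C s = oplusSingle C (fun b => M.av {b} s) :=
      fun C => (h (Classical.arbitrary Agent) C s).2
    rw [hav A, hav B, hav (A ∪ B)]
    exact ⟨oplusSingle_nonempty (fun b => (h b A s).1) A,
      fun σ hσ => restrict_mem_oplusSingle _ hσ,
      fun σA hA σB hB => union_mem_oplusSingle hA hB⟩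
  · intro h a A s
    have hres := fun B C hBC => (h B C hBC s).2.1
    have hunion := fun B C hBC => (h B C hBC s).2.2
    refine ⟨(h {a} ∅ (Set.inter_empty _) s).1, Set.Subset.antisymm ?_ ?_⟩
    · exact fun σ hσ => mem_oplusSingle_iff.2 fun b hb =>
        restrict_mem_of_subset (S := fun C => M.av C s) hres (Set.singleton_subset_iff.2 hb) hσ
    · exact fun σ hσ => mem_of_forall_restrict_singleton_mem (h ∅ ∅ (Set.inter_empty _) s).1
        hunion A.toFinite σ (mem_oplusSingle_iff.1 hσ)

/-- equivalence of the two sets of constraints on availability functions. -/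
theorem stmt1 {Agent AP : Type} [Fintype Agent] [Nonempty Agent] [Countable AP]
    (M : AMAM Agent AP) :
    (∀ (a : Agent) (A : Set Agent) (s : M.State),
        (M.av {a} s).Nonempty ∧ M.av A s = oplusSingle A (fun b => M.av {b} s))
    ↔
    (∀ (A B : Set Agent), A ∩ B = ∅ → ∀ s : M.State,
        (M.av A s).Nonempty ∧
        (∀ σ ∈ M.av (A ∪ B) s,
          JA.restrict (show A ⊆ A ∪ B from Set.subset_union_left) σ ∈ M.av A s) ∧
        (∀ σA ∈ M.av A s, ∀ σB ∈ M.av B s, JA.union σA σB ∈ M.av (A ∪ B) s)) :=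
  stmt1_general M
end

section
/- Let M = (ST, AC, {av_A | A ⊆ AG}, {out_A | A ⊆ AG}, lab) be an abstract multi-agent action model. The following two conditions are equivalent: (1) for all disjoint coalitions A, B ⊆ AG and every state s ∈ ST, (a) av_A(s) is nonempty, (b) for every σ_{A∪B} ∈ av_{A∪B}(s), σ_{A∪B}|_A ∈ av_A(s), and (c) for every σ_A ∈ av_A(s) and σ_B ∈ av_B(s), σ_A ∪ σ_B ∈ av_{A∪B}(s); (2) for every coalition A ⊆ AG and every state s ∈ ST, (a) av_A(s) is nonempty, (b) for every σ_AG ∈ av_AG(s), σ_AG|_A ∈ av_A(s), and (c) for every σ_A ∈ av_A(s) and every σ_{AG∖A} ∈ av_{AG∖A}(s), σ_A ∪ σ_{AG∖A} ∈ av_AG(s). -/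
open scoped Classical

private lemma av_cast_iff {Agent AP : Type} (M : AMAM Agent AP) {A B : Set Agent}
    (h : A = B) (s : M.State) (σ : JA Agent M.Action A) :
    JA.cast h σ ∈ M.av B s ↔ σ ∈ M.av A s := by
  subst h; rfl

/-- equivalence of the two sets of constraints on availability functions. -/
theorem stmt2 {Agent AP : Type} [Fintype Agent] [Nonempty Agent] [Countable AP]
    (M : AMAM Agent AP) :
    (∀ (A B : Set Agent), A ∩ B = ∅ → ∀ s : M.State,
        (M.av A s).Nonempty ∧
        (∀ σ ∈ M.av (A ∪ B) s,
          JA.restrict (show A ⊆ A ∪ B from Set.subset_union_left) σ ∈ M.av A s) ∧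
        (∀ σA ∈ M.av A s, ∀ σB ∈ M.av B s, JA.union σA σB ∈ M.av (A ∪ B) s))
    ↔
    (∀ (A : Set Agent) (s : M.State),
        (M.av A s).Nonempty ∧
        (∀ σ ∈ M.av Set.univ s, JA.restrict (Set.subset_univ A) σ ∈ M.av A s) ∧
        (∀ σA ∈ M.av A s, ∀ σC ∈ M.av (Set.univ \ A) s,
          JA.cast (Set.union_diff_cancel (Set.subset_univ A)) (JA.union σA σC) ∈
            M.av Set.univ s)) := by
  constructor
  · intro h1 A s
    have hU : A ∪ (Set.univ \ A) = (Set.univ : Set Agent) :=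
      Set.union_diff_cancel (Set.subset_univ A)
    have hd : A ∩ (Set.univ \ A) = ∅ := by ext a; simp
    obtain ⟨hne, hres, hun⟩ := h1 A (Set.univ \ A) hd s
    refine ⟨hne, ?_, ?_⟩
    · intro σ hσ
      have hσ' : JA.cast hU.symm σ ∈ M.av (A ∪ (Set.univ \ A)) s := by
        rw [av_cast_iff]; exact hσ
      have := hres _ hσ'
      have heq : JA.restrict (show A ⊆ A ∪ (Set.univ \ A) from Set.subset_union_left)
          (JA.cast hU.symm σ) = JA.restrict (Set.subset_univ A) σ := rfl
      rwa [heq] at this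
    · intro σA hA σC hC
      have := hun σA hA σC hC
      rwa [av_cast_iff]
  · intro h2 A B hAB s
    refine ⟨(h2 A s).1, ?_, ?_⟩
    · -- restriction condition
      intro σ hσ
      have hUc : (A ∪ B) ∪ (Set.univ \ (A ∪ B)) = (Set.univ : Set Agent) :=
        Set.union_diff_cancel (Set.subset_univ _)
      obtain ⟨σC, hσC⟩ := (h2 (Set.univ \ (A ∪ B)) s).1
      have hG : JA.cast hUc (JA.union σ σC) ∈ M.av Set.univ s :=
        (h2 (A ∪ B) s).2.2 σ hσ σC hσC
      have := (h2 A s).2.1 _ hG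
      have heq : JA.restrict (Set.subset_univ A) (JA.cast hUc (JA.union σ σC))
          = JA.restrict (show A ⊆ A ∪ B from Set.subset_union_left) σ := by
        funext a ha
        have haAB : a ∈ A ∪ B := Set.subset_union_left ha
        show JA.union σ σC a (Set.mem_union_left _ haAB) = σ a (Set.subset_union_left ha)
        simp only [JA.union]
        rw [dif_pos haAB]
      rwa [heq] at this
    · -- union condition
      intro σA hA σB hB
      -- extend σB to a grand joint action
      have hUB : B ∪ (Set.univ \ B) = (Set.univ : Set Agent) :=
        Set.union_diff_cancel (Set.subset_univ _)
      obtain ⟨σ', hσ'⟩ := (h2 (Set.univ \ B) s).1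
      have hG1 : JA.cast hUB (JA.union σB σ') ∈ M.av Set.univ s :=
        (h2 B s).2.2 σB hB σ' hσ'
      set σG : JA Agent M.Action (Set.univ : Set Agent) := JA.cast hUB (JA.union σB σ')
        with hσGdef
      -- restrict it to univ \ A
      have hC : JA.restrict (Set.subset_univ (Set.univ \ A)) σG ∈ M.av (Set.univ \ A) s :=
        (h2 (Set.univ \ A) s).2.1 σG hG1
      have hUA : A ∪ (Set.univ \ A) = (Set.univ : Set Agent) :=
        Set.union_diff_cancel (Set.subset_univ _)
      have hG2 : JA.cast hUA (JA.union σA (JA.restrict (Set.subset_univ (Set.univ \ A)) σG))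
          ∈ M.av Set.univ s :=
        (h2 A s).2.2 σA hA _ hC
      have := (h2 (A ∪ B) s).2.1 _ hG2
      have heq : JA.restrict (Set.subset_univ (A ∪ B))
          (JA.cast hUA (JA.union σA (JA.restrict (Set.subset_univ (Set.univ \ A)) σG)))
          = JA.union σA σB := by
        funext a ha
        show JA.union σA (JA.restrict (Set.subset_univ (Set.univ \ A)) σG) a
            (show a ∈ A ∪ (Set.univ \ A) by rw [hUA]; trivial) = JA.union σA σB a ha
        by_cases haA : a ∈ A
        · simp only [JA.union]
          rw [dif_pos haA, dif_pos haA]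
        · have haB : a ∈ B := ha.resolve_left haA
          simp only [JA.union]
          rw [dif_neg haA, dif_neg haA]
          show JA.union σB σ' a
              (show a ∈ B ∪ (Set.univ \ B) from Set.mem_union_left _ haB) = σB a haB
          simp only [JA.union]
          rw [dif_pos haB]
      rwa [heq] at this
end

section
/- Pauly's axiomatic system for Coalition Logic CL and the alternative axiomatic system for CL are equivalent: for every formula φ of the language Φ, φ is derivable in Pauly's system if and only if φ is derivable in the alternative system. -/
open scoped Classical

section Stmt3Aux

variable {Agent AP : Type}

lemma propEval_neg (v : Formula Agent AP → Bool) (φ : Formula Agent AP) :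
    propEval v φ.neg = !(propEval v φ) := rfl

lemma propEval_and (v : Formula Agent AP → Bool) (φ ψ : Formula Agent AP) :
    propEval v (φ.and ψ) = (propEval v φ && propEval v ψ) := rfl

lemma propEval_or (v : Formula Agent AP → Bool) (φ ψ : Formula Agent AP) :
    propEval v (φ.or ψ) = (propEval v φ || propEval v ψ) := by
  simp [Formula.or, propEval]

lemma propEval_imp (v : Formula Agent AP → Bool) (φ ψ : Formula Agent AP) :
    propEval v (φ.imp ψ) = (!(propEval v φ) || propEval v ψ) := by
  simp [Formula.imp, propEval_or, propEval_neg]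

lemma propEval_iff (v : Formula Agent AP → Bool) (φ ψ : Formula Agent AP) :
    propEval v (φ.iff ψ) = ((propEval v φ) == (propEval v ψ)) := by
  simp only [Formula.iff, propEval_and, propEval_imp]
  cases propEval v φ <;> cases propEval v ψ <;> rfl

lemma propEval_bot (v : Formula Agent AP → Bool) :
    propEval v (Formula.bot : Formula Agent AP) = false := rfl

lemma taut_and1 (X Y : Formula Agent AP) :
    Tautology ((X.and Y).imp X) := by
  intro v
  simp only [propEval_imp, propEval_iff, propEval_and, propEval_or, propEval_neg, propEval_bot, propEval]
  cases propEval v X <;> cases propEval v Y <;> rfl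

lemma taut_and2 (X Y : Formula Agent AP) :
    Tautology ((X.and Y).imp Y) := by
  intro v
  simp only [propEval_imp, propEval_iff, propEval_and, propEval_or, propEval_neg, propEval_bot, propEval]
  cases propEval v X <;> cases propEval v Y <;> rfl

lemma taut_comb1 (X E Y : Formula Agent AP) :
    Tautology ((X.imp E).imp ((E.imp (X.imp Y)).imp (X.imp Y))) := by
  intro v
  simp only [propEval_imp, propEval_iff, propEval_and, propEval_or, propEval_neg, propEval_bot, propEval]
  cases propEval v X <;> cases propEval v E <;> cases propEval v Y <;> rfl

lemma taut_em (X : Formula Agent AP) :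
    Tautology ((X.neg).or X) := by
  intro v
  simp only [propEval_imp, propEval_iff, propEval_and, propEval_or, propEval_neg, propEval_bot, propEval]
  cases propEval v X <;> rfl

lemma taut_orimp (P Q : Formula Agent AP) :
    Tautology ((P.or Q).imp ((P.neg).imp Q)) := by
  intro v
  simp only [propEval_imp, propEval_iff, propEval_and, propEval_or, propEval_neg, propEval_bot, propEval]
  cases propEval v P <;> cases propEval v Q <;> rfl

lemma taut_iff1 (X Y : Formula Agent AP) :
    Tautology ((X.iff Y).imp (X.imp Y)) := by
  intro v
  simp only [propEval_imp, propEval_iff, propEval_and, propEval_or, propEval_neg, propEval_bot, propEval]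
  cases propEval v X <;> cases propEval v Y <;> rfl

lemma taut_iff2 (X Y : Formula Agent AP) :
    Tautology ((X.iff Y).imp (Y.imp X)) := by
  intro v
  simp only [propEval_imp, propEval_iff, propEval_and, propEval_or, propEval_neg, propEval_bot, propEval]
  cases propEval v X <;> cases propEval v Y <;> rfl

lemma taut_comb2 (X Y : Formula Agent AP) :
    Tautology ((X.imp Y).imp ((Y.imp X).imp (X.iff Y))) := by
  intro v
  simp only [propEval_imp, propEval_iff, propEval_and, propEval_or, propEval_neg, propEval_bot, propEval]
  cases propEval v X <;> cases propEval v Y <;> rfl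

lemma taut_comb3 (X Y : Formula Agent AP) :
    Tautology ((X.imp Y).imp (X.iff (X.and Y))) := by
  intro v
  simp only [propEval_imp, propEval_iff, propEval_and, propEval_or, propEval_neg, propEval_bot, propEval]
  cases propEval v X <;> cases propEval v Y <;> rfl

lemma taut_andcomm (X Y : Formula Agent AP) :
    Tautology ((X.and Y).iff (Y.and X)) := by
  intro v
  simp only [propEval_imp, propEval_iff, propEval_and, propEval_or, propEval_neg, propEval_bot, propEval]
  cases propEval v X <;> cases propEval v Y <;> rfl

lemma taut_trans (X Y Z : Formula Agent AP) :
    Tautology ((X.imp Y).imp ((Y.imp Z).imp (X.imp Z))) := by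
  intro v
  simp only [propEval_imp, propEval_iff, propEval_and, propEval_or, propEval_neg, propEval_bot, propEval]
  cases propEval v X <;> cases propEval v Y <;> cases propEval v Z <;> rfl

lemma taut_mpand (X Y : Formula Agent AP) :
    Tautology (((X.imp Y).and X).imp Y) := by
  intro v
  simp only [propEval_imp, propEval_iff, propEval_and, propEval_or, propEval_neg, propEval_bot, propEval]
  cases propEval v X <;> cases propEval v Y <;> rfl

lemma taut_curry (X Y Z : Formula Agent AP) :
    Tautology (((X.and Y).imp Z).imp (X.imp (Y.imp Z))) := by
  intro v
  simp only [propEval_imp, propEval_iff, propEval_and, propEval_or, propEval_neg, propEval_bot, propEval]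
  cases propEval v X <;> cases propEval v Y <;> cases propEval v Z <;> rfl

lemma taut_comb4 (X Y Z W : Formula Agent AP) :
    Tautology (Y.imp (((X.and Y).imp Z).imp ((Z.imp W).imp (X.imp W)))) := by
  intro v
  simp only [propEval_imp, propEval_iff, propEval_and, propEval_or, propEval_neg, propEval_bot, propEval]
  cases propEval v X <;> cases propEval v Y <;> cases propEval v Z <;> cases propEval v W <;> rfl

lemma taut_comb5 (E Q X Z P : Formula Agent AP) :
    Tautology (((E.neg).imp Q).imp (((X.and E).imp Z).imp ((Z.imp P).imp (X.imp (P.or Q))))) := by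
  intro v
  simp only [propEval_imp, propEval_iff, propEval_and, propEval_or, propEval_neg, propEval_bot, propEval]
  cases propEval v E <;> cases propEval v Q <;> cases propEval v X <;> cases propEval v Z <;> cases propEval v P <;> rfl

lemma taut_comb6 (X : Formula Agent AP) :
    Tautology (X.imp ((Formula.top : Formula Agent AP).iff X)) := by
  intro v
  simp only [propEval_imp, propEval_iff, propEval_and, propEval_or, propEval_neg, propEval_bot, propEval]
  cases propEval v X <;> rfl

lemma taut_K (X Y : Formula Agent AP) :
    Tautology (X.imp (Y.imp X)) := by
  intro v
  simp only [propEval_imp, propEval_iff, propEval_and, propEval_or, propEval_neg, propEval_bot, propEval]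
  cases propEval v X <;> cases propEval v Y <;> rfl

lemma taut_seloremove (X Y : Formula Agent AP) :
    Tautology (((X.or Y).and (Y.neg)).imp X) := by
  intro v
  simp only [propEval_imp, propEval_iff, propEval_and, propEval_or, propEval_neg, propEval_bot, propEval]
  cases propEval v X <;> cases propEval v Y <;> rfl

-- Derived rules in AltCL
lemma AltCL.rm {φ ψ : Formula Agent AP} (A : Set Agent) (h : AltCL (φ.imp ψ)) :
    AltCL ((Formula.coal A φ).imp (Formula.coal A ψ)) := by
  have h1 : AltCL ((Formula.coal A φ).imp (Formula.coal ∅ (φ.imp ψ))) := AltCL.cn A φ h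
  have h2 := AltCL.mg A φ ψ (Agent := Agent) (AP := AP)
  exact AltCL.mp (AltCL.mp (AltCL.tau (taut_comb1 _ _ _)) h1) h2

lemma pauly_of_alt {φ : Formula Agent AP} (h : PaulyCL φ) : AltCL φ := by
  induction h with
  | tau h => exact AltCL.tau h
  | mon A φ ψ => exact AltCL.rm A (AltCL.tau (taut_and1 φ ψ))
  | live A => exact AltCL.live A
  | ser A => exact AltCL.ser A
  | ia h φ ψ => exact AltCL.ia h φ ψ
  | max φ =>
      have hser : AltCL (Formula.coal (∅ : Set Agent) (Formula.top : Formula Agent AP)) :=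
        AltCL.ser ∅
      have hcn : AltCL ((Formula.coal (∅ : Set Agent) (Formula.top : Formula Agent AP)).imp
          (Formula.coal ∅ ((φ.neg).or φ))) :=
        AltCL.cn ∅ Formula.top (AltCL.tau (taut_em φ))
      have h1 : AltCL (Formula.coal (∅ : Set Agent) ((φ.neg).or φ)) := AltCL.mp hcn hser
      have hdet := AltCL.det (∅ : Set Agent) φ.neg φ (AP := AP)
      have h2 : AltCL ((Formula.coal (∅ : Set Agent) φ.neg).or
          (Formula.coal (Set.univ : Set Agent) φ)) := AltCL.mp hdet h1
      exact AltCL.mp (AltCL.tau (taut_orimp _ _)) h2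
  | mp _ _ ih1 ih2 => exact AltCL.mp ih1 ih2
  | re A _ ih =>
      rename_i φ ψ _
      have h1 : AltCL (φ.imp ψ) := AltCL.mp (AltCL.tau (taut_iff1 φ ψ)) ih
      have h2 : AltCL (ψ.imp φ) := AltCL.mp (AltCL.tau (taut_iff2 φ ψ)) ih
      have h3 := AltCL.rm A h1
      have h4 := AltCL.rm A h2
      exact AltCL.mp (AltCL.mp (AltCL.tau (taut_comb2 _ _)) h3) h4

-- Derived rules in PaulyCL
lemma PaulyCL.rm {φ ψ : Formula Agent AP} (A : Set Agent) (h : PaulyCL (φ.imp ψ)) :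
    PaulyCL ((Formula.coal A φ).imp (Formula.coal A ψ)) := by
  have hiff : PaulyCL (φ.iff (φ.and ψ)) := PaulyCL.mp (PaulyCL.tau (taut_comb3 φ ψ)) h
  have h1 : PaulyCL ((Formula.coal A φ).imp (Formula.coal A (φ.and ψ))) :=
    PaulyCL.mp (PaulyCL.tau (taut_iff1 _ _)) (PaulyCL.re A hiff)
  have h2 : PaulyCL ((Formula.coal A (φ.and ψ)).imp (Formula.coal A (ψ.and φ))) :=
    PaulyCL.mp (PaulyCL.tau (taut_iff1 _ _))
      (PaulyCL.re A (PaulyCL.tau (taut_andcomm φ ψ)))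
  have h3 : PaulyCL ((Formula.coal A (ψ.and φ)).imp (Formula.coal A ψ)) :=
    PaulyCL.mon A ψ φ
  have h12 := PaulyCL.mp (PaulyCL.mp (PaulyCL.tau (taut_trans _ _ _)) h1) h2
  exact PaulyCL.mp (PaulyCL.mp (PaulyCL.tau (taut_trans _ _ _)) h12) h3

lemma alt_of_pauly {φ : Formula Agent AP} (h : AltCL φ) : PaulyCL φ := by
  induction h with
  | tau h => exact PaulyCL.tau h
  | mg A φ ψ =>
      have hia : PaulyCL (((Formula.coal (∅ : Set Agent) (φ.imp ψ)).and
          (Formula.coal A φ)).imp (Formula.coal ((∅ : Set Agent) ∪ A) ((φ.imp ψ).and φ))) :=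
        PaulyCL.ia (Set.empty_inter A) (φ.imp ψ) φ
      rw [Set.empty_union] at hia
      have hrm : PaulyCL ((Formula.coal A ((φ.imp ψ).and φ)).imp (Formula.coal A ψ)) :=
        PaulyCL.rm A (PaulyCL.tau (taut_mpand φ ψ))
      have h12 := PaulyCL.mp (PaulyCL.mp (PaulyCL.tau (taut_trans _ _ _)) hia) hrm
      exact PaulyCL.mp (PaulyCL.tau (taut_curry _ _ _)) h12
  | mc h φ =>
      rename_i A B
      have hia : PaulyCL (((Formula.coal A φ).and
          (Formula.coal (B \ A) (Formula.top : Formula Agent AP))).imp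
          (Formula.coal (A ∪ B \ A) (φ.and Formula.top))) :=
        PaulyCL.ia (Set.inter_diff_self A B) φ Formula.top
      rw [Set.union_diff_cancel h] at hia
      have hser : PaulyCL (Formula.coal (B \ A) (Formula.top : Formula Agent AP)) :=
        PaulyCL.ser (B \ A)
      have hrm : PaulyCL ((Formula.coal B (φ.and Formula.top)).imp (Formula.coal B φ)) :=
        PaulyCL.rm B (PaulyCL.tau (taut_and1 φ Formula.top))
      exact PaulyCL.mp (PaulyCL.mp (PaulyCL.mp
        (PaulyCL.tau (taut_comb4 _ _ _ _)) hser) hia) hrm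
  | live A => exact PaulyCL.live A
  | ser A => exact PaulyCL.ser A
  | ia h φ ψ => exact PaulyCL.ia h φ ψ
  | det A φ ψ =>
      have hmax : PaulyCL (((Formula.coal (∅ : Set Agent) ψ.neg).neg).imp
          (Formula.coal (Set.univ : Set Agent) ψ)) := PaulyCL.max ψ
      have hia : PaulyCL (((Formula.coal A (φ.or ψ)).and
          (Formula.coal (∅ : Set Agent) ψ.neg)).imp
          (Formula.coal (A ∪ ∅) ((φ.or ψ).and ψ.neg))) :=
        PaulyCL.ia (Set.inter_empty A) (φ.or ψ) ψ.neg
      rw [Set.union_empty] at hia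
      have hrm : PaulyCL ((Formula.coal A ((φ.or ψ).and ψ.neg)).imp (Formula.coal A φ)) :=
        PaulyCL.rm A (PaulyCL.tau (taut_seloremove φ ψ))
      exact PaulyCL.mp (PaulyCL.mp (PaulyCL.mp
        (PaulyCL.tau (taut_comb5 _ _ _ _ _)) hmax) hia) hrm
  | mp _ _ ih1 ih2 => exact PaulyCL.mp ih1 ih2
  | cn A ψ _ ih =>
      rename_i φ _
      have hiff : PaulyCL ((Formula.top : Formula Agent AP).iff φ) :=
        PaulyCL.mp (PaulyCL.tau (taut_comb6 φ)) ih
      have h1 : PaulyCL ((Formula.coal (∅ : Set Agent)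
            (Formula.top : Formula Agent AP)).imp (Formula.coal ∅ φ)) :=
        PaulyCL.mp (PaulyCL.tau (taut_iff1 _ _)) (PaulyCL.re ∅ hiff)
      have h2 : PaulyCL (Formula.coal (∅ : Set Agent) φ) :=
        PaulyCL.mp h1 (PaulyCL.ser ∅)
      exact PaulyCL.mp (PaulyCL.tau (taut_K _ _)) h2

end Stmt3Aux

/-- Pauly's axiomatic system for CL and the alternative axiomatic system
for CL are equivalent. -/
theorem stmt3 {Agent AP : Type} [Fintype Agent] [Nonempty Agent] [Countable AP]
    (φ : Formula Agent AP) : PaulyCL φ ↔ AltCL φ := by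
  exact ⟨pauly_of_alt, alt_of_pauly⟩
end

section
/- In Pauly's axiomatic system for Coalition Logic CL, the Determinism schema is derivable: for all formulas φ, ψ and every coalition A, ⊢ ⟨A⟩(φ ∨ ψ) → (⟨A⟩φ ∨ ⟨AG⟩ψ). -/
open scoped Classical

/-- the Determinism schema is derivable in Pauly's system for CL. -/
theorem stmt4 {Agent AP : Type} [Fintype Agent] [Nonempty Agent] [Countable AP]
    (A : Set Agent) (φ ψ : Formula Agent AP) :
    PaulyCL ((Formula.coal A (φ.or ψ)).imp
      ((Formula.coal A φ).or (Formula.coal Set.univ ψ))) := by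
  set X := Formula.coal A (φ.or ψ) with hX
  set Y := Formula.coal (∅ : Set Agent) ψ.neg with hY
  set C := Formula.coal A ((φ.or ψ).and ψ.neg) with hC
  set D := Formula.coal A (φ.and ψ.neg) with hD
  set Z1 := Formula.coal A φ with hZ1
  set Z2 := Formula.coal (Set.univ : Set Agent) ψ with hZ2
  have h1 : PaulyCL ((X.and Y).imp C) := by
    have := PaulyCL.ia (A := A) (B := (∅ : Set Agent)) (AP := AP)
      (Set.inter_empty A) (φ.or ψ) ψ.neg
    rwa [Set.union_empty] at this
  have h2 : PaulyCL (C.iff D) := by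
    apply PaulyCL.re A
    apply PaulyCL.tau
    intro v
    simp only [Formula.iff, Formula.imp, Formula.or, propEval]
    cases propEval v φ <;> cases propEval v ψ <;> rfl
  have h3 : PaulyCL (D.imp Z1) := PaulyCL.mon A φ ψ.neg
  have h4 : PaulyCL (Y.neg.imp Z2) := PaulyCL.max ψ
  have Tgen : ∀ X Y C D Z1 Z2 : Formula Agent AP, PaulyCL (((X.and Y).imp C).imp
      ((C.iff D).imp ((D.imp Z1).imp ((Y.neg.imp Z2).imp (X.imp (Z1.or Z2)))))) := by
    intro X Y C D Z1 Z2
    apply PaulyCL.tau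
    intro v
    simp only [Formula.iff, Formula.imp, Formula.or, propEval]
    generalize propEval v X = a
    generalize propEval v Y = b
    generalize propEval v C = c
    generalize propEval v D = d
    generalize propEval v Z1 = e
    generalize propEval v Z2 = f
    revert a b c d e f
    decide
  have T := Tgen X Y C D Z1 Z2
  exact ((T.mp h1).mp h2).mp h3 |>.mp h4
end

section
/- In the alternative axiomatic system for Coalition Logic CL, the AG-maximality schema is derivable: for every formula φ, ⊢ ¬⟨∅⟩¬φ → ⟨AG⟩φ. -/
open scoped Classical

/-- the AG-maximality schema is derivable in the alternative system for CL. -/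
theorem stmt5 {Agent AP : Type} [Fintype Agent] [Nonempty Agent] [Countable AP]
    (φ : Formula Agent AP) :
    AltCL (((Formula.coal ∅ φ.neg).neg).imp (Formula.coal Set.univ φ)) := by
  -- ⟨∅⟩⊤
  have h1 : AltCL (Formula.coal (∅ : Set Agent) (Formula.top : Formula Agent AP)) :=
    AltCL.ser ∅
  -- ⊤ → (¬φ ∨ φ) is a tautology
  have t1 : AltCL ((Formula.top : Formula Agent AP).imp (φ.neg.or φ)) := by
    apply AltCL.tau
    intro v
    simp [Formula.imp, Formula.or, propEval]
  -- ⟨∅⟩⊤ → ⟨∅⟩(⊤ → (¬φ ∨ φ))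
  have h2 := AltCL.cn (∅ : Set Agent) (Formula.top : Formula Agent AP) t1
  have h3 : AltCL (Formula.coal (∅ : Set Agent)
      ((Formula.top : Formula Agent AP).imp (φ.neg.or φ))) := AltCL.mp h2 h1
  -- MG: ⟨∅⟩(⊤ → X) → (⟨∅⟩⊤ → ⟨∅⟩X)
  have h4 := AltCL.mg (∅ : Set Agent) (Formula.top : Formula Agent AP) (φ.neg.or φ)
  have h5 : AltCL (Formula.coal (∅ : Set Agent) (φ.neg.or φ)) :=
    AltCL.mp (AltCL.mp h4 h3) h1
  -- Det: ⟨∅⟩(¬φ ∨ φ) → (⟨∅⟩¬φ ∨ ⟨univ⟩φ)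
  have h6 := AltCL.det (∅ : Set Agent) φ.neg φ
  have h7 : AltCL ((Formula.coal (∅ : Set Agent) φ.neg).or
      (Formula.coal (Set.univ : Set Agent) φ)) := AltCL.mp h6 h5
  -- (A ∨ B) → (¬A → B)
  have t2 : AltCL (((Formula.coal (∅ : Set Agent) φ.neg).or
      (Formula.coal (Set.univ : Set Agent) φ)).imp
      (((Formula.coal ∅ φ.neg).neg).imp (Formula.coal Set.univ φ))) := by
    apply AltCL.tau
    intro v
    simp only [Formula.imp, Formula.or, propEval]
    cases v (Formula.coal ∅ φ.neg) <;> cases v (Formula.coal Set.univ φ) <;> rfl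
  exact AltCL.mp t2 h7
end

section
/- Let M = (ST, AC, {av_A | A ⊆ AG}, {out_A | A ⊆ AG}, lab) be an abstract multi-agent action model. The following two sets of conditions are equivalent: (1) (a) for every coalition A and state s, av_A(s) = av_AG(s)|_A; (b) for every state s, av_AG(s) = {σ_AG ∈ JA_AG | out_AG(s, σ_AG) ≠ ∅}; (c) for every coalition A, state s and σ_A ∈ JA_A, out_A(s, σ_A) = ⋃{out_AG(s, σ_AG) | σ_AG ∈ JA_AG and σ_A ⊆ σ_AG}; and (2) (a) for every coalition A, state s and σ_A ∈ JA_A, out_A(s, σ_A) = ⋃{out_AG(s, σ_AG) | σ_AG ∈ JA_AG and σ_A ⊆ σ_AG}; (b) for every coalition A and state s, av_A(s) = {σ_A ∈ JA_A | out_A(s, σ_A) ≠ ∅}. -/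
open scoped Classical

/-- the two equivalent definitions of general concurrent game models. -/
theorem stmt6 {Agent AP : Type} [Fintype Agent] [Nonempty Agent] [Countable AP]
    (M : AMAM Agent AP) :
    ((∀ (A : Set Agent) (s : M.State),
        M.av A s = {σ | ∃ σG ∈ M.av Set.univ s, JA.restrict (Set.subset_univ A) σG = σ}) ∧
     (∀ s : M.State,
        M.av Set.univ s = {σ | M.out Set.univ s σ ≠ ∅}) ∧
     (∀ (A : Set Agent) (s : M.State) (σ : JA Agent M.Action A),
        M.out A s σ = {t | ∃ σG : JA Agent M.Action (Set.univ : Set Agent),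
          JA.restrict (Set.subset_univ A) σG = σ ∧ t ∈ M.out Set.univ s σG}))
    ↔
    ((∀ (A : Set Agent) (s : M.State) (σ : JA Agent M.Action A),
        M.out A s σ = {t | ∃ σG : JA Agent M.Action (Set.univ : Set Agent),
          JA.restrict (Set.subset_univ A) σG = σ ∧ t ∈ M.out Set.univ s σG}) ∧
     (∀ (A : Set Agent) (s : M.State),
        M.av A s = {σ : JA Agent M.Action A | M.out A s σ ≠ ∅})) := by
  have key : (∀ (A : Set Agent) (s : M.State) (σ : JA Agent M.Action A),
        M.out A s σ = {t | ∃ σG : JA Agent M.Action (Set.univ : Set Agent),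
          JA.restrict (Set.subset_univ A) σG = σ ∧ t ∈ M.out Set.univ s σG}) →
      ∀ (A : Set Agent) (s : M.State) (σ : JA Agent M.Action A),
        (M.out A s σ ≠ ∅ ↔ ∃ σG : JA Agent M.Action (Set.univ : Set Agent),
          JA.restrict (Set.subset_univ A) σG = σ ∧ M.out Set.univ s σG ≠ ∅) := by
    intro hout A s σ
    rw [hout A s σ]
    constructor
    · intro h
      obtain ⟨t, σG, hres, ht⟩ := Set.nonempty_iff_ne_empty.mpr h
      exact ⟨σG, hres, Set.nonempty_iff_ne_empty.mp ⟨t, ht⟩⟩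
    · rintro ⟨σG, hres, hne⟩
      obtain ⟨t, ht⟩ := Set.nonempty_iff_ne_empty.mpr hne
      exact Set.nonempty_iff_ne_empty.mp ⟨t, σG, hres, ht⟩
  constructor
  · rintro ⟨hav, hgrand, hout⟩
    refine ⟨hout, fun A s => ?_⟩
    rw [hav A s]
    ext σ
    simp only [Set.mem_setOf_eq, key hout A s σ]
    constructor
    · rintro ⟨σG, hσG, hres⟩
      refine ⟨σG, hres, ?_⟩
      rw [hgrand s] at hσG
      exact hσG
    · rintro ⟨σG, hres, hne⟩
      refine ⟨σG, ?_, hres⟩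
      rw [hgrand s]
      exact hne
  · rintro ⟨hout, hav⟩
    refine ⟨fun A s => ?_, fun s => ?_, hout⟩
    · rw [hav A s]
      ext σ
      simp only [Set.mem_setOf_eq, key hout A s σ]
      constructor
      · rintro ⟨σG, hres, hne⟩
        refine ⟨σG, ?_, hres⟩
        rw [hav Set.univ s]
        exact hne
      · rintro ⟨σG, hσG, hres⟩
        refine ⟨σG, hres, ?_⟩
        rw [hav Set.univ s] at hσG
        exact hσG
    · exact hav Set.univ s
end

section
/- Let M = (ST, AC, {av_A | A ⊆ AG}, {out_A | A ⊆ AG}, lab) be an abstract multi-agent action model. The following three conditions are equivalent: (1) for every coalition A ⊆ AG and state s ∈ ST, av_A(s) = av_AG(s)|_A; (2) for all disjoint coalitions A, B ⊆ AG and every state s ∈ ST, (a) for every σ_{A∪B} ∈ av_{A∪B}(s), σ_{A∪B}|_A ∈ av_A(s), and (b) for every σ_A ∈ av_A(s) there exists σ_B ∈ av_B(s) such that σ_A ∪ σ_B ∈ av_{A∪B}(s); (3) for every coalition A ⊆ AG and every state s ∈ ST, (a) for every σ_AG ∈ av_AG(s), σ_AG|_A ∈ av_A(s), and (b) for every σ_A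 ∈ av_A(s) there exists σ_{AG∖A} ∈ av_{AG∖A}(s) such that σ_A ∪ σ_{AG∖A} ∈ av_AG(s). -/
open scoped Classical

section Aux

variable {Agent Action AP : Type}

theorem JA.ext' {A : Set Agent} {σ τ : JA Agent Action A}
    (h : ∀ a (ha : a ∈ A), σ a ha = τ a ha) : σ = τ :=
  funext fun a => funext fun ha => h a ha

theorem JA.union_apply_left {A B : Set Agent} (σA : JA Agent Action A)
    (σB : JA Agent Action B) {a : Agent} (ha : a ∈ A) (hab : a ∈ A ∪ B) :
    JA.union σA σB a hab = σA a ha := dif_pos ha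

theorem JA.union_apply_right {A B : Set Agent} (σA : JA Agent Action A)
    (σB : JA Agent Action B) {a : Agent} (hna : a ∉ A) (hb : a ∈ B) (hab : a ∈ A ∪ B) :
    JA.union σA σB a hab = σB a hb := dif_neg hna

theorem mem_av_cast {M : AMAM Agent AP} {C D : Set Agent} (h : C = D) {s : M.State}
    {σ : JA Agent M.Action C} (hσ : σ ∈ M.av C s) : JA.cast h σ ∈ M.av D s := by
  subst h; exact hσ

/-- Condition (1) of Statement 7. -/
def Cond1 (M : AMAM Agent AP) : Prop :=
  ∀ (A : Set Agent) (s : M.State),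
    M.av A s = {σ | ∃ σG ∈ M.av Set.univ s, JA.restrict (Set.subset_univ A) σG = σ}

/-- Condition (2) of Statement 7. -/
def Cond2 (M : AMAM Agent AP) : Prop :=
  ∀ (A B : Set Agent), A ∩ B = ∅ → ∀ s : M.State,
    (∀ σ ∈ M.av (A ∪ B) s,
      JA.restrict (show A ⊆ A ∪ B from Set.subset_union_left) σ ∈ M.av A s) ∧
    (∀ σA ∈ M.av A s, ∃ σB ∈ M.av B s, JA.union σA σB ∈ M.av (A ∪ B) s)

/-- Condition (3) of Statement 7. -/
def Cond3 (M : AMAM Agent AP) : Prop :=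
  ∀ (A : Set Agent) (s : M.State),
    (∀ σ ∈ M.av Set.univ s, JA.restrict (Set.subset_univ A) σ ∈ M.av A s) ∧
    (∀ σA ∈ M.av A s, ∃ σC ∈ M.av (Set.univ \ A) s,
      JA.cast (Set.union_diff_cancel (Set.subset_univ A)) (JA.union σA σC) ∈
        M.av Set.univ s)

theorem cond1_to_cond2 {M : AMAM Agent AP} (h1 : Cond1 M) : Cond2 M := by
  intro A B hAB s
  constructor
  · intro σ hσ
    rw [h1 (A ∪ B) s] at hσ
    obtain ⟨σG, hG, rfl⟩ := hσ
    rw [h1 A s]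
    exact ⟨σG, hG, rfl⟩
  · intro σA hσA
    rw [h1 A s] at hσA
    obtain ⟨σG, hG, rfl⟩ := hσA
    refine ⟨JA.restrict (Set.subset_univ B) σG, by rw [h1 B s]; exact ⟨σG, hG, rfl⟩, ?_⟩
    rw [h1 (A ∪ B) s]
    refine ⟨σG, hG, ?_⟩
    apply JA.ext'
    intro a ha
    by_cases hA : a ∈ A
    · rw [JA.union_apply_left _ _ hA]; rfl
    · rw [JA.union_apply_right _ _ hA (ha.resolve_left hA)]; rfl

theorem cond2_to_cond1 {M : AMAM Agent AP} (h2 : Cond2 M) : Cond1 M := by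
  intro A s
  have hdisj : A ∩ (Set.univ \ A) = ∅ := by
    ext a; simp
  have hU : A ∪ (Set.univ \ A) = (Set.univ : Set Agent) :=
    Set.union_diff_cancel (Set.subset_univ A)
  ext σA
  constructor
  · intro hσA
    obtain ⟨σC, hσC, hun⟩ := (h2 A (Set.univ \ A) hdisj s).2 σA hσA
    refine ⟨JA.cast hU (JA.union σA σC), mem_av_cast hU hun, ?_⟩
    apply JA.ext'
    intro a ha
    show JA.union σA σC a (by rw [hU]; exact Set.mem_univ a) = σA a ha
    rw [JA.union_apply_left _ _ ha]
  · rintro ⟨σG, hG, rfl⟩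
    have hG' : JA.cast hU.symm σG ∈ M.av (A ∪ (Set.univ \ A)) s := mem_av_cast hU.symm hG
    exact (h2 A (Set.univ \ A) hdisj s).1 _ hG'

theorem cond1_to_cond3 {M : AMAM Agent AP} (h1 : Cond1 M) : Cond3 M := by
  intro A s
  constructor
  · intro σ hσ
    rw [h1 A s]
    exact ⟨σ, hσ, rfl⟩
  · intro σA hσA
    rw [h1 A s] at hσA
    obtain ⟨σG, hG, rfl⟩ := hσA
    refine ⟨JA.restrict (Set.subset_univ _) σG,
      by rw [h1 (Set.univ \ A) s]; exact ⟨σG, hG, rfl⟩, ?_⟩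
    have : JA.cast (Set.union_diff_cancel (Set.subset_univ A))
        (JA.union (JA.restrict (Set.subset_univ A) σG)
          (JA.restrict (Set.subset_univ (Set.univ \ A)) σG)) = σG := by
      apply JA.ext'
      intro a ha
      show JA.union _ _ a (by
        rw [Set.union_diff_cancel (Set.subset_univ A)]; exact ha) = σG a ha
      by_cases hA : a ∈ A
      · rw [JA.union_apply_left _ _ hA]; rfl
      · rw [JA.union_apply_right _ _ hA (show a ∈ Set.univ \ A from ⟨Set.mem_univ a, hA⟩)]; rfl
    rw [this]
    exact hG

theorem cond3_to_cond1 {M : AMAM Agent AP} (h3 : Cond3 M) : Cond1 M := by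
  intro A s
  ext σA
  constructor
  · intro hσA
    obtain ⟨σC, hσC, hun⟩ := (h3 A s).2 σA hσA
    refine ⟨_, hun, ?_⟩
    apply JA.ext'
    intro a ha
    show JA.union σA σC a (by
      rw [Set.union_diff_cancel (Set.subset_univ A)]; exact Set.mem_univ a) = σA a ha
    rw [JA.union_apply_left _ _ ha]
  · rintro ⟨σG, hG, rfl⟩
    exact (h3 A s).1 σG hG

end Aux

/-- three equivalent sets of constraints on availability functions of
general concurrent game models. -/
theorem stmt7 {Agent AP : Type} [Fintype Agent] [Nonempty Agent] [Countable AP]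
    (M : AMAM Agent AP) :
    ((∀ (A : Set Agent) (s : M.State),
        M.av A s = {σ | ∃ σG ∈ M.av Set.univ s, JA.restrict (Set.subset_univ A) σG = σ})
      ↔
      (∀ (A B : Set Agent), A ∩ B = ∅ → ∀ s : M.State,
        (∀ σ ∈ M.av (A ∪ B) s,
          JA.restrict (show A ⊆ A ∪ B from Set.subset_union_left) σ ∈ M.av A s) ∧
        (∀ σA ∈ M.av A s, ∃ σB ∈ M.av B s, JA.union σA σB ∈ M.av (A ∪ B) s)))
    ∧
    ((∀ (A B : Set Agent), A ∩ B = ∅ → ∀ s : M.State,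
        (∀ σ ∈ M.av (A ∪ B) s,
          JA.restrict (show A ⊆ A ∪ B from Set.subset_union_left) σ ∈ M.av A s) ∧
        (∀ σA ∈ M.av A s, ∃ σB ∈ M.av B s, JA.union σA σB ∈ M.av (A ∪ B) s))
      ↔
      (∀ (A : Set Agent) (s : M.State),
        (∀ σ ∈ M.av Set.univ s, JA.restrict (Set.subset_univ A) σ ∈ M.av A s) ∧
        (∀ σA ∈ M.av A s, ∃ σC ∈ M.av (Set.univ \ A) s,
          JA.cast (Set.union_diff_cancel (Set.subset_univ A)) (JA.union σA σC) ∈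
            M.av Set.univ s))) := by
  refine ⟨⟨cond1_to_cond2, cond2_to_cond1⟩,
    ⟨fun h2 => cond1_to_cond3 (cond2_to_cond1 h2),
     fun h3 => cond1_to_cond2 (cond3_to_cond1 h3)⟩⟩
end

section
/- Suppose AG has at least two agents, let a, b ∈ AG be distinct, and let p, q be distinct atomic propositions. Then the formula (⟨{a}⟩p ∧ ⟨{b}⟩q) → ⟨{a, b}⟩(p ∧ q) is not MCL-valid: there exists a general concurrent game model M and a state s of M at which this formula is false. -/
open scoped Classical

/-!
Let `a` and `b` each play a Boolean, where the play only proceeds if the two choices agree: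
agreeing on `true` leads to a `p`-state, agreeing on `false` to a `q`-state. Then `a` alone
forces `p` by playing `true` and `b` alone forces `q` by playing `false`, but no state satisfies
`p ∧ q`. Independence of agents fails because in a general concurrent game model the executable
joint actions need not form a product of individual choices.
-/

theorem sat_imp {Agent AP : Type} (M : AMAM Agent AP) (s : M.State) (φ ψ : Formula Agent AP) :
    Sat M s (φ.imp ψ) ↔ (Sat M s φ → Sat M s ψ) := by
  simp only [Formula.imp, Formula.or, Sat, not_not]
  tauto

/-- The model in which coalition availability and outcomes are induced from a grand-coalition
outcome function `o` exactly as clauses (1)–(3) of a general concurrent game model prescribe. -/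
def AMAM.ofGrandOutcome {Agent AP S Act : Type} [Nonempty S] [Nonempty Act]
    (o : S → JA Agent Act Set.univ → Set S) (lab : S → Set AP) : AMAM Agent AP where
  State := S
  Action := Act
  state_nonempty := ‹_›
  action_nonempty := ‹_›
  av A s := {σ | ∃ σG, (o s σG).Nonempty ∧ JA.restrict (Set.subset_univ A) σG = σ}
  out A s σ := {t | ∃ σG, JA.restrict (Set.subset_univ A) σG = σ ∧ t ∈ o s σG}
  lab := lab

namespace AMAM

variable {Agent AP S Act : Type} [Nonempty S] [Nonempty Act]
  (o : S → JA Agent Act Set.univ → Set S) (lab : S → Set AP)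

theorem isGCGM_ofGrandOutcome : IsGCGM (ofGrandOutcome o lab) where
  av_restrict _ _ := Set.ext fun _ =>
    ⟨fun ⟨σG, hne, hσ⟩ => ⟨σG, ⟨σG, hne, rfl⟩, hσ⟩,
      fun ⟨_, ⟨σG, hne, hσG⟩, hσ⟩ => ⟨σG, hne, (congrArg _ hσG).trans hσ⟩⟩
  av_grand _ := Set.ext fun _ =>
    ⟨fun ⟨σG, ⟨t, ht⟩, hσ⟩ => Set.nonempty_iff_ne_empty.mp ⟨t, σG, hσ, ht⟩,
      fun h => let ⟨t, σG, hσ, ht⟩ := Set.nonempty_iff_ne_empty.mpr h; ⟨σG, ⟨t, ht⟩, hσ⟩⟩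
  out_union _ _ _ := Set.ext fun _ =>
    ⟨fun ⟨σG, hσ, ht⟩ => ⟨σG, hσ, σG, rfl, ht⟩,
      fun ⟨_, hσ, σG, hσG, ht⟩ => ⟨σG, (congrArg _ hσG).trans hσ, ht⟩⟩

variable {o lab}

theorem sat_coal_ofGrandOutcome_iff (s : S) (A : Set Agent) (φ : Formula Agent AP) :
    Sat (ofGrandOutcome o lab) s (.coal A φ) ↔ ∃ σG, (o s σG).Nonempty ∧
      ∀ τG, JA.restrict (Set.subset_univ A) τG = JA.restrict (Set.subset_univ A) σG →
        ∀ t ∈ o s τG, Sat (ofGrandOutcome o lab) t φ :=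
  ⟨fun ⟨_, ⟨σG, hne, hσ⟩, hφ⟩ => ⟨σG, hne, fun τG hτ t ht => hφ t ⟨τG, hτ.trans hσ, ht⟩⟩,
    fun ⟨σG, hne, hφ⟩ => ⟨_, ⟨σG, hne, rfl⟩, fun t ⟨τG, hτ, ht⟩ => hφ τG hτ t ht⟩⟩

/-- Every available joint action has an outcome, so an ability `⟨A⟩φ` needs a `φ`-state. -/
theorem exists_sat_of_sat_coal_ofGrandOutcome {s : S} {A : Set Agent} {φ : Formula Agent AP}
    (h : Sat (ofGrandOutcome o lab) s (.coal A φ)) : ∃ t : S, Sat (ofGrandOutcome o lab) t φ :=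
  let ⟨σG, ⟨t, ht⟩, hφ⟩ := (sat_coal_ofGrandOutcome_iff s A φ).mp h
  ⟨t, hφ σG rfl t ht⟩

end AMAM

section Coordination

variable {Agent AP : Type} (a b : Agent) (p q : AP)

/-- From the initial state `none`, the grand coalition can only move when `a` and `b` play the
same Boolean `x`, and then reaches `some x`, where `p` holds if `x` and `q` holds otherwise. -/
def coordinationModel : AMAM Agent AP :=
  AMAM.ofGrandOutcome
    (fun s σ => {t | s = none ∧ σ a (Set.mem_univ a) = σ b (Set.mem_univ b) ∧
      t = some (σ a (Set.mem_univ a))})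
    (fun s => s.elim ∅ fun x => {cond x p q})

theorem isGCGM_coordinationModel : IsGCGM (coordinationModel a b p q) :=
  AMAM.isGCGM_ofGrandOutcome _ _

/-- Either of `a`, `b` alone decides the outcome, since the other one has to match its move. -/
theorem sat_coal_coordinationModel {c : Agent} (hc : c = a ∨ c = b) (x : Bool) :
    Sat (coordinationModel a b p q) (none : Option Bool) (.coal {c} (.atom (cond x p q))) := by
  refine (AMAM.sat_coal_ofGrandOutcome_iff _ _ _).mpr
    ⟨fun _ _ => x, ⟨some x, rfl, rfl, rfl⟩, fun τG hτ t ⟨_, hab, ht⟩ => ?_⟩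
  have hτc : τG c (Set.mem_univ c) = x := congrFun (congrFun hτ c) rfl
  have hτa : τG a (Set.mem_univ a) = x := by
    rcases hc with rfl | rfl
    exacts [hτc, hab.trans hτc]
  subst ht
  rw [hτa]
  exact Set.mem_singleton _

theorem not_sat_and_coordinationModel (hpq : p ≠ q) (s : Option Bool) :
    ¬ Sat (coordinationModel a b p q) s ((Formula.atom p).and (.atom q)) := by
  rintro ⟨hp, hq⟩
  rcases s with _ | x
  · exact hp
  · exact hpq ((Set.mem_singleton_iff.mp hp).trans (Set.mem_singleton_iff.mp hq).symm)

end Coordination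

theorem stmt9_general {Agent AP : Type} (a b : Agent) (p q : AP) (hpq : p ≠ q) :
    ∃ M : AMAM Agent AP, IsGCGM M ∧ ∃ s : M.State,
      ¬ Sat M s (((Formula.coal ({a} : Set Agent) (Formula.atom p)).and
          (Formula.coal ({b} : Set Agent) (Formula.atom q))).imp
        (Formula.coal ({a, b} : Set Agent) ((Formula.atom p).and (Formula.atom q)))) := by
  refine ⟨coordinationModel a b p q, isGCGM_coordinationModel a b p q, (none : Option Bool), ?_⟩
  intro himp
  obtain ⟨t, ht⟩ := AMAM.exists_sat_of_sat_coal_ofGrandOutcome <| (sat_imp _ _ _ _).mp himp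
    ⟨sat_coal_coordinationModel a b p q (.inl rfl) true,
      sat_coal_coordinationModel a b p q (.inr rfl) false⟩
  exact not_sat_and_coordinationModel a b p q hpq t ht

/-- the independence-of-agents schema is not MCL-valid. -/
theorem stmt9 {Agent AP : Type} [Fintype Agent] [Nonempty Agent] [Countable AP]
    (a b : Agent) (hab : a ≠ b) (p q : AP) (hpq : p ≠ q) :
    ∃ M : AMAM Agent AP, IsGCGM M ∧ ∃ s : M.State,
      ¬ Sat M s (((Formula.coal ({a} : Set Agent) (Formula.atom p)).and
          (Formula.coal ({b} : Set Agent) (Formula.atom q))).imp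
        (Formula.coal ({a, b} : Set Agent) ((Formula.atom p).and (Formula.atom q)))) :=
  stmt9_general a b p q hpq
end

section
/- In the axiomatic system for MCL, the schema of special independence of agents is derivable: for all formulas φ, ψ and every coalition A, ⊢_MCL (⟨∅⟩φ ∧ ⟨A⟩ψ) → ⟨A⟩(φ ∧ ψ). -/
open scoped Classical

lemma taut_chain {Agent AP : Type} (a b c d e : Formula Agent AP) :
    Tautology ((a.imp b).imp ((b.imp (a.imp c)).imp
      ((c.imp (d.imp e)).imp ((a.and d).imp e)))) := by
  intro v
  simp only [propEval, Formula.imp, Formula.or]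
  cases propEval v a <;> cases propEval v b <;> cases propEval v c <;>
    cases propEval v d <;> cases propEval v e <;> rfl

/-- special independence of agents is derivable in MCL. -/
theorem stmt12 {Agent AP : Type} [Fintype Agent] [Nonempty Agent] [Countable AP]
    (A : Set Agent) (φ ψ : Formula Agent AP) :
    MCLProv (((Formula.coal ∅ φ).and (Formula.coal A ψ)).imp
      (Formula.coal A (φ.and ψ))) := by
  have hT : MCLProv (φ.imp (ψ.imp (φ.and ψ))) := by
    apply MCLProv.tau
    intro v
    simp only [propEval, Formula.imp, Formula.or]
    cases propEval v φ <;> cases propEval v ψ <;> rfl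
  have h2 : MCLProv ((Formula.coal (∅ : Set Agent) φ).imp
      (Formula.coal ∅ (φ.imp (ψ.imp (φ.and ψ))))) := MCLProv.cn ∅ φ hT
  have h3 := MCLProv.mg (Agent := Agent) (AP := AP) ∅ φ (ψ.imp (φ.and ψ))
  have h4 := MCLProv.mg (Agent := Agent) (AP := AP) A ψ (φ.and ψ)
  exact MCLProv.mp (MCLProv.mp (MCLProv.mp (MCLProv.tau (taut_chain _ _ _ _ _)) h2) h3) h4
end
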